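/- arXiv:2307.00422 — 4 statements merged into one kernel-verified Lean document; each statement's English description precedes it below -/
import Mathlib

section
/- The variance semi-ring is a commutative semi-ring: on the carrier ℤ × ℝ × ℝ, with addition (c₁,s₁,q₁) ⊕ (c₂,s₂,q₂) = (c₁+c₂, s₁+s₂, q₁+q₂), multiplication (c₁,s₁,q₁) ⊗ (c₂,s₂,q₂) = (c₁c₂, s₁c₂+s₂c₁, q₁c₂+q₂c₁+2s₁s₂), zero element (0,0,0), and unit element (1,0,0), the operation ⊕ is an associative commutative operation with identity (0,0,0), the operation ⊗ is an associative commutative operation with identity (1,0,0), ⊗ distributes over ⊕, and (0,0,0) is absorbing for ⊗. -/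
/-- The carrier of the variance semi-ring: `ℤ × ℝ × ℝ`. -/
abbrev VarSR : Type := ℤ × ℝ × ℝ

/-- Addition of the variance semi-ring: componentwise. -/
def vAdd (x y : VarSR) : VarSR :=
  (x.1 + y.1, x.2.1 + y.2.1, x.2.2 + y.2.2)

/-- Multiplication of the variance semi-ring. -/
def vMul (x y : VarSR) : VarSR :=
  (x.1 * y.1, x.2.1 * y.1 + y.2.1 * x.1,
    x.2.2 * y.1 + y.2.2 * x.1 + 2 * x.2.1 * y.2.1)

/-- Zero element of the variance semi-ring. -/
def vZero : VarSR := (0, 0, 0)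

/-- Unit element of the variance semi-ring. -/
def vOne : VarSR := (1, 0, 0)

/-- The variance semi-ring is a commutative semi-ring. -/
theorem variance_semiring_is_comm_semiring :
    (∀ a b c : VarSR, vAdd (vAdd a b) c = vAdd a (vAdd b c)) ∧
    (∀ a b : VarSR, vAdd a b = vAdd b a) ∧
    (∀ a : VarSR, vAdd vZero a = a) ∧
    (∀ a : VarSR, vAdd a vZero = a) ∧
    (∀ a b c : VarSR, vMul (vMul a b) c = vMul a (vMul b c)) ∧
    (∀ a b : VarSR, vMul a b = vMul b a) ∧
    (∀ a : VarSR, vMul vOne a = a) ∧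
    (∀ a : VarSR, vMul a vOne = a) ∧
    (∀ a b c : VarSR, vMul a (vAdd b c) = vAdd (vMul a b) (vMul a c)) ∧
    (∀ a b c : VarSR, vMul (vAdd a b) c = vAdd (vMul a c) (vMul b c)) ∧
    (∀ a : VarSR, vMul vZero a = vZero) ∧
    (∀ a : VarSR, vMul a vZero = vZero) := by
  refine ⟨?_, ?_, ?_, ?_, ?_, ?_, ?_, ?_, ?_, ?_, ?_, ?_⟩ <;>
    intros <;> simp only [vAdd, vMul, vZero, vOne, Prod.mk.injEq, Prod.ext_iff] <;>
    exact ⟨by push_cast; ring, by push_cast; ring, by push_cast; ring⟩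
end

section
/- The variance lift is addition-to-multiplication preserving from the real numbers into the variance semi-ring: for all y₁, y₂ ∈ ℝ, lift(y₁ + y₂) = lift(y₁) ⊗ lift(y₂), i.e. (1, y₁+y₂, (y₁+y₂)²) = (1, y₁, y₁²) ⊗ (1, y₂, y₂²); moreover lift(0) = (1, 0, 0), the unit element of the variance semi-ring. -/
/-- The variance lift `lift(y) = (1, y, y²)`. -/
def vLift (y : ℝ) : VarSR := (1, y, y ^ 2)

/-- The variance lift is addition-to-multiplication preserving from `ℝ` into the
variance semi-ring, and it sends `0` to the unit element `(1, 0, 0)`. -/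
theorem variance_lift_add_to_mul_preserving :
    (∀ y₁ y₂ : ℝ, vLift (y₁ + y₂) = vMul (vLift y₁) (vLift y₂)) ∧
    vLift 0 = ((1 : ℤ), (0 : ℝ), (0 : ℝ)) := by
  constructor
  · intro y₁ y₂
    simp only [vLift, vMul, Prod.mk.injEq]
    norm_num
    ring
  · simp [vLift]
end

section
/- Residual updates factorize through the variance semi-ring: for every finite index set I, every family of reals (yᵢ)_{i∈I}, and every prediction p ∈ ℝ, the ⊕-sum of the lifted residuals equals the ⊕-sum of the lifted original values multiplied (via ⊗) by the lift of the additive inverse of the prediction; that is, ⊕_{i∈I} (1, yᵢ − p, (yᵢ − p)²) = (⊕_{i∈I} (1, yᵢ, yᵢ²)) ⊗ (1, −p, p²). -/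
/-! The variance lift `y ↦ (1, y, y²)` turns `+` into `⊗`, since
`(y - p)² = y² + p² - 2yp`, and `⊗` distributes over `⊕`; so
`⊕ᵢ lift (yᵢ - p) = ⊕ᵢ (lift yᵢ ⊗ lift (-p)) = (⊕ᵢ lift yᵢ) ⊗ lift (-p)`. -/

def varLift (y : ℝ) : VarSR := (1, y, y ^ 2)

theorem vMul_varLift_varLift (a b : ℝ) :
    vMul (varLift a) (varLift b) = varLift (a + b) := by
  simp only [vMul, varLift, Prod.mk.injEq]
  refine ⟨rfl, ?_, ?_⟩ <;> push_cast <;> ring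

theorem vMul_add_left (x y z : VarSR) : vMul (x + y) z = vMul x z + vMul y z := by
  simp only [vMul, Prod.fst_add, Prod.snd_add, Prod.mk_add_mk, Prod.mk.injEq]
  refine ⟨?_, ?_, ?_⟩ <;> push_cast <;> ring

def vMulRight (z : VarSR) : VarSR →+ VarSR :=
  AddMonoidHom.mk' (vMul · z) fun x y => vMul_add_left x y z

theorem Finset.sum_vMul {ι : Type*} (s : Finset ι) (f : ι → VarSR) (z : VarSR) :
    vMul (∑ i ∈ s, f i) z = ∑ i ∈ s, vMul (f i) z :=
  map_sum (vMulRight z) f s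

/-- Residual updates factorize through the variance semi-ring:
`⊕_{i∈I} (1, yᵢ − p, (yᵢ − p)²) = (⊕_{i∈I} (1, yᵢ, yᵢ²)) ⊗ (1, −p, p²)`. -/
theorem residual_update_factorizes {ι : Type*} (I : Finset ι) (y : ι → ℝ) (p : ℝ) :
    (∑ i ∈ I, (((1 : ℤ), y i - p, (y i - p) ^ 2) : VarSR)) =
      vMul (∑ i ∈ I, (((1 : ℤ), y i, (y i) ^ 2) : VarSR)) ((1 : ℤ), -p, p ^ 2) := by
  have lift_neg : (((1 : ℤ), -p, p ^ 2) : VarSR) = varLift (-p) := by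
    rw [varLift, neg_sq]
  rw [lift_neg, Finset.sum_vMul]
  refine Finset.sum_congr rfl fun i _ => ?_
  change varLift (y i - p) = vMul (varLift (y i)) (varLift (-p))
  rw [vMul_varLift_varLift, sub_eq_add_neg]
end

section
/- Semi-join predicate pushdown is correct when the join key is a key of the dimension table: let K, α, β be types, let D₁ be a finite set of tuples in α × K and D₂ a finite set of tuples in K × β, and suppose D₂ is functional on K (for all (k, b) and (k, b') in D₂, b = b'). Let σ be a predicate on K × β. Then {(a, k, b) : (a,k) ∈ D₁ ∧ (k,b) ∈ D₂ ∧ σ(k,b)} = {(a, k, b) : (a,k) ∈ D₁ ∧ (∃ b₀, (k,b₀) ∈ D₂ ∧ σ(k,b₀)) ∧ (k,b) ∈ D₂}; that is, D₁ ⋈ σ(D₂) = σ'(D₁) ⋈ D₂, where σ'(D₁) keeps exactly the tuples of D₁ whose join key appears in the key projection of σ(D₂). -/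
/-- Semi-join predicate pushdown is correct when the join key is a key of the
dimension table: if `D₂ ⊆ K × β` is functional on `K`, then for any predicate `σ`
on `K × β`, `D₁ ⋈ σ(D₂) = σ'(D₁) ⋈ D₂`, where `σ'` keeps exactly the tuples of
`D₁` whose join key appears in the key projection of `σ(D₂)`. -/
theorem semijoin_predicate_pushdown
    {α K β : Type*} (D₁ : Finset (α × K)) (D₂ : Finset (K × β))
    (hfun : ∀ ⦃k : K⦄ ⦃b b' : β⦄, (k, b) ∈ D₂ → (k, b') ∈ D₂ → b = b')
    (σ : K × β → Prop) :
    {x : α × K × β |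
        (x.1, x.2.1) ∈ D₁ ∧ (x.2.1, x.2.2) ∈ D₂ ∧ σ (x.2.1, x.2.2)} =
      {x : α × K × β |
        ((x.1, x.2.1) ∈ D₁ ∧ ∃ b₀ : β, (x.2.1, b₀) ∈ D₂ ∧ σ (x.2.1, b₀)) ∧
          (x.2.1, x.2.2) ∈ D₂} := by
  ext ⟨a, k, b⟩
  constructor
  · rintro ⟨h1, h2, h3⟩
    exact ⟨⟨h1, b, h2, h3⟩, h2⟩
  · rintro ⟨⟨h1, b₀, hb₀, hσ⟩, h2⟩
    exact ⟨h1, h2, hfun h2 hb₀ ▸ hσ⟩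
end
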